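/- For all n, k ≥ 0, ∑_{A} q^{w(A)} = ∑_{m=0}^{min(n,k)} m! · {n+1 brace m+1}*_q · m! · {k+1 brace m+1}*_q, where the left-hand sum runs over all lonesum 0-1 matrices A of size n × k (rows indexed 1, …, n and columns indexed 1, …, k), and w(A) is the sum of the indices of the all-zero rows of A plus the sum of the indices of the all-zero columns of A. -/

import Mathlib

open Finset Polynomial

attribute [local instance] Classical.propDecidable

/-- A 0-1 matrix (with Boolean entries) is lonesum if it contains neither
`(0 1 / 1 0)` nor `(1 0 / 0 1)` as a 2×2 submatrix. -/
def IsLonesum {n k : ℕ} (M : Fin n → Fin k → Bool) : Prop :=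
  ∀ i1 i2 : Fin n, ∀ j1 j2 : Fin k, i1 < i2 → j1 < j2 →
    ¬(M i1 j1 = false ∧ M i1 j2 = true ∧ M i2 j1 = true ∧ M i2 j2 = false) ∧
    ¬(M i1 j1 = true ∧ M i1 j2 = false ∧ M i2 j1 = false ∧ M i2 j2 = true)

/-- The weight `w(A)`: the sum of the indices (in `1, …, n`) of the all-zero rows
plus the sum of the indices (in `1, …, k`) of the all-zero columns. -/
def lonesumWeight {n k : ℕ} (M : Fin n → Fin k → Bool) : ℕ :=
  (∑ i : Fin n, if ∀ j, M i j = false then (i : ℕ) + 1 else 0) +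
    (∑ j : Fin k, if ∀ i, M i j = false then (j : ℕ) + 1 else 0)

/-- `π` is an (unordered) set partition of the finite set `S` into nonempty blocks. -/
def IsPartitionOf (S : Finset ℕ) (π : Finset (Finset ℕ)) : Prop :=
  (∀ B ∈ π, B.Nonempty) ∧ (π : Set (Finset ℕ)).PairwiseDisjoint id ∧
    (∀ x, x ∈ S ↔ ∃ B ∈ π, x ∈ B)

/-- The Cigler weight of a partition: the sum of the elements of the block containing `0`. -/
def ciglerWeight (π : Finset (Finset ℕ)) : ℕ :=
  ∑ B ∈ π.filter (fun B => 0 ∈ B), ∑ i ∈ B, i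

/-- Cigler's q-Stirling number of the second kind `{n brace k}*_q`: the generating
polynomial of `q^{∑_{i ∈ B₀} i}` over all partitions of `{0, 1, …, n-1}` into `k`
nonempty blocks, where `B₀` is the block containing `0`. -/
noncomputable def ciglerStirling (n k : ℕ) : Polynomial ℚ :=
  ∑ᶠ π ∈ {π : Finset (Finset ℕ) | IsPartitionOf (Finset.range n) π ∧ π.card = k},
    (Polynomial.X : Polynomial ℚ) ^ ciglerWeight π

/-!
The rows of a lonesum matrix are pairwise comparable as subsets of the columns, so its distinct
nonzero rows form a chain `r₁ < ⋯ < rₘ`. Label row `i` by the rank `f i` of its row in this chain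
(`0` for a zero row) and column `j` by the number `g j` of the `rₛ` containing it; then
`A i j = 1 ↔ m < f i + g j`. Conversely, every pair of maps `f`, `g` into `{0, …, m}` that hit each
of `1, …, m` arises in this way from exactly one lonesum matrix, whose zero rows and columns are
those labelled `0`. Hence the left side is `∑ₘ Fₙₘ(q) Fₖₘ(q)`, where `Fₙₘ` is the weight polynomial
of such labellings `f` of `{1, …, n}`.

Extending `f` by `0 ↦ 0`, its fibres form a partition of `{0, …, n}` into `m + 1` blocks, and the
block of `0` has sum `w(f)`. Each partition arises from exactly `m!` labellings, one for each
numbering of its blocks that avoid `0`, so `Fₙₘ = m! {n+1 brace m+1}*_q`.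
-/

noncomputable section

section ChainRank

variable {α : Type*} [PartialOrder α]

def chainRank (D : Finset α) (x : α) : ℕ := #{y ∈ D | y ≤ x}

variable {D : Finset α} {x y : α}

lemma chainRank_le_card : chainRank D x ≤ #D := card_filter_le _ _

lemma chainRank_mono (h : x ≤ y) : chainRank D x ≤ chainRank D y :=
  card_le_card (monotone_filter_right _ fun _ _ hz => hz.trans h)

lemma one_le_chainRank (hx : x ∈ D) : 1 ≤ chainRank D x :=
  card_pos.mpr ⟨x, mem_filter.mpr ⟨hx, le_rfl⟩⟩

lemma chainRank_le_chainRank_iff (hD : IsChain (· ≤ ·) (D : Set α)) (hx : x ∈ D) (hy : y ∈ D) :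
    chainRank D x ≤ chainRank D y ↔ x ≤ y := by
  refine ⟨fun h => ?_, chainRank_mono⟩
  by_contra hxy
  have hyx : y ≤ x := (hD.total hy hx).resolve_right hxy
  have hlt : {z ∈ D | z ≤ y} ⊂ {z ∈ D | z ≤ x} :=
    (ssubset_iff_of_subset (monotone_filter_right _ fun _ _ hz => hz.trans hyx)).mpr
      ⟨x, mem_filter.mpr ⟨hx, le_rfl⟩, fun hx' => hxy (mem_filter.mp hx').2⟩
  exact (card_lt_card hlt).not_ge h

lemma chainRank_injOn (hD : IsChain (· ≤ ·) (D : Set α)) : Set.InjOn (chainRank D) D :=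
  fun _ hx _ hy h => le_antisymm ((chainRank_le_chainRank_iff hD hx hy).mp h.le)
    ((chainRank_le_chainRank_iff hD hy hx).mp h.ge)

lemma image_chainRank (hD : IsChain (· ≤ ·) (D : Set α)) : D.image (chainRank D) = Icc 1 #D := by
  refine eq_of_subset_of_card_le (fun r hr => ?_) ?_
  · obtain ⟨x, hx, rfl⟩ := mem_image.mp hr
    exact mem_Icc.mpr ⟨one_le_chainRank hx, chainRank_le_card⟩
  · rw [card_image_of_injOn (chainRank_injOn hD), Nat.card_Icc, Nat.add_sub_cancel]

end ChainRank

section Labelings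

def labelings (n m : ℕ) : Finset (Fin n → ℕ) :=
  {f ∈ Fintype.piFinset fun _ => range (m + 1) | ∀ t, 0 < t → t ≤ m → ∃ i, f i = t}

def labelWeight {n : ℕ} (f : Fin n → ℕ) : ℕ := ∑ i, if f i = 0 then (i : ℕ) + 1 else 0

variable {n m : ℕ} {f : Fin n → ℕ}

lemma mem_labelings : f ∈ labelings n m ↔ (∀ i, f i ≤ m) ∧ ∀ t, 0 < t → t ≤ m → ∃ i, f i = t := by
  simp [labelings]

lemma le_of_mem_labelings (hf : f ∈ labelings n m) : m ≤ n := by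
  have := card_le_card_of_surjOn f (s := univ) (t := Icc 1 m) fun t ht => by
    obtain ⟨i, hi⟩ := (mem_labelings.mp hf).2 t (mem_Icc.mp ht).1 (mem_Icc.mp ht).2
    exact ⟨i, mem_univ i, hi⟩
  simpa using this

end Labelings

section Threshold

variable {n k m : ℕ} {f : Fin n → ℕ} {g : Fin k → ℕ}

def thresholdRow (m : ℕ) (g : Fin k → ℕ) (s : ℕ) : Fin k → Bool := fun j => decide (m < s + g j)

def thresholdMatrix (m : ℕ) (f : Fin n → ℕ) (g : Fin k → ℕ) : Fin n → Fin k → Bool :=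
  fun i => thresholdRow m g (f i)

lemma thresholdRow_zero (hg : ∀ j, g j ≤ m) : thresholdRow m g 0 = ⊥ := by
  funext j
  simpa [thresholdRow] using hg j

lemma thresholdRow_le_thresholdRow_iff (hg : g ∈ labelings k m) {s s' : ℕ} (hs : s ≤ m) :
    thresholdRow m g s ≤ thresholdRow m g s' ↔ s ≤ s' := by
  refine ⟨fun h => ?_, fun h j => ?_⟩
  · by_contra! hlt
    obtain ⟨j, hj⟩ := (mem_labelings.mp hg).2 (m + 1 - s) (by omega) (by omega)
    have := h j
    simp only [thresholdRow, Bool.le_iff_imp, decide_eq_true_eq] at this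
    omega
  · simp only [thresholdRow, Bool.le_iff_imp, decide_eq_true_eq]
    omega

lemma thresholdRow_injOn (hg : g ∈ labelings k m) : Set.InjOn (thresholdRow m g) (Set.Iic m) :=
  fun _ hs _ hs' h => le_antisymm ((thresholdRow_le_thresholdRow_iff hg hs).mp h.le)
    ((thresholdRow_le_thresholdRow_iff hg hs').mp h.ge)

lemma thresholdRow_eq_bot_iff (hg : g ∈ labelings k m) {s : ℕ} (hs : s ≤ m) :
    thresholdRow m g s = ⊥ ↔ s = 0 := by
  rw [← thresholdRow_zero (mem_labelings.mp hg).1]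
  exact (thresholdRow_injOn hg).eq_iff hs (Nat.zero_le m)

lemma mem_labelings_of_injOn_thresholdRow (hg : ∀ j, g j ≤ m)
    (hinj : Set.InjOn (thresholdRow m g) (Set.Iic m)) : g ∈ labelings k m := by
  refine mem_labelings.mpr ⟨hg, fun t ht htm => ?_⟩
  -- a column where the threshold rows of levels `m - t` and `m + 1 - t` differ has `g j = t`
  have hne : thresholdRow m g (m + 1 - t) ≠ thresholdRow m g (m - t) := fun h => by
    have := hinj (Set.mem_Iic.mpr (by omega)) (Set.mem_Iic.mpr (by omega)) h
    omega
  obtain ⟨j, hj⟩ := Function.ne_iff.mp hne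
  refine ⟨j, ?_⟩
  simp only [thresholdRow, ne_eq, decide_eq_decide] at hj
  omega

lemma isLonesum_thresholdMatrix : IsLonesum (thresholdMatrix m f g) := by
  intro _ _ _ _ _ _
  simp only [thresholdMatrix, thresholdRow, decide_eq_true_eq, decide_eq_false_iff_not]
  omega

lemma forall_add_le_iff_of_mem_labelings (hg : g ∈ labelings k m) {a : ℕ} (ha : a ≤ m) :
    (∀ j, a + g j ≤ m) ↔ a = 0 := by
  obtain ⟨hg1, hg2⟩ := mem_labelings.mp hg
  refine ⟨fun h => ?_, fun h j => by simpa [h] using hg1 j⟩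
  by_contra ha0
  obtain ⟨j, hj⟩ := hg2 m (by omega) le_rfl
  have := h j
  omega

lemma lonesumWeight_thresholdMatrix (hf : f ∈ labelings n m) (hg : g ∈ labelings k m) :
    lonesumWeight (thresholdMatrix m f g) = labelWeight f + labelWeight g := by
  have hrow (i : Fin n) : (∀ j, thresholdMatrix m f g i j = false) ↔ f i = 0 := by
    simpa [thresholdMatrix, thresholdRow] using
      forall_add_le_iff_of_mem_labelings hg ((mem_labelings.mp hf).1 i)
  have hcol (j : Fin k) : (∀ i, thresholdMatrix m f g i j = false) ↔ g j = 0 := by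
    simpa [thresholdMatrix, thresholdRow, add_comm] using
      forall_add_le_iff_of_mem_labelings hf ((mem_labelings.mp hg).1 j)
  simp only [lonesumWeight, labelWeight, hrow, hcol]

end Threshold

section NonzeroRows

variable {n k : ℕ}

def nonzeroRows (M : Fin n → Fin k → Bool) : Finset (Fin k → Bool) := (univ.image M).erase ⊥

def rowRank (M : Fin n → Fin k → Bool) (i : Fin n) : ℕ := chainRank (nonzeroRows M) (M i)

def colCount (M : Fin n → Fin k → Bool) (j : Fin k) : ℕ := #{r ∈ nonzeroRows M | r j}

variable {M : Fin n → Fin k → Bool} {m : ℕ} {f : Fin n → ℕ} {g : Fin k → ℕ}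

lemma mem_nonzeroRows {r : Fin k → Bool} : r ∈ nonzeroRows M ↔ r ≠ ⊥ ∧ ∃ i, M i = r := by
  simp [nonzeroRows]

lemma nonzeroRows_thresholdMatrix (hf : f ∈ labelings n m) (hg : g ∈ labelings k m) :
    nonzeroRows (thresholdMatrix m f g) = (Icc 1 m).image (thresholdRow m g) := by
  obtain ⟨hf1, hf2⟩ := mem_labelings.mp hf
  ext r
  simp only [mem_nonzeroRows, mem_image, mem_Icc, thresholdMatrix]
  constructor
  · rintro ⟨hr, i, rfl⟩
    refine ⟨f i, ⟨Nat.one_le_iff_ne_zero.mpr fun h0 => hr ?_, hf1 i⟩, rfl⟩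
    rw [h0, thresholdRow_zero (mem_labelings.mp hg).1]
  · rintro ⟨s, ⟨hs1, hsm⟩, rfl⟩
    obtain ⟨i, hi⟩ := hf2 s hs1 hsm
    exact ⟨(thresholdRow_eq_bot_iff hg hsm).not.mpr (by omega), i, by rw [hi]⟩

lemma thresholdRow_injOn_Icc (hg : g ∈ labelings k m) :
    Set.InjOn (thresholdRow m g) (Icc 1 m : Set ℕ) :=
  (thresholdRow_injOn hg).mono fun _ hs => Set.mem_Iic.mpr (mem_Icc.mp hs).2

lemma card_nonzeroRows_thresholdMatrix (hf : f ∈ labelings n m) (hg : g ∈ labelings k m) :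
    #(nonzeroRows (thresholdMatrix m f g)) = m := by
  rw [nonzeroRows_thresholdMatrix hf hg, card_image_of_injOn (thresholdRow_injOn_Icc hg),
    Nat.card_Icc, Nat.add_sub_cancel]

lemma rowRank_thresholdMatrix (hf : f ∈ labelings n m) (hg : g ∈ labelings k m) (i : Fin n) :
    rowRank (thresholdMatrix m f g) i = f i := by
  have hfilter : {s ∈ Icc 1 m | thresholdRow m g s ≤ thresholdRow m g (f i)} = Icc 1 (f i) := by
    ext s
    simp only [mem_filter, mem_Icc]
    constructor
    · rintro ⟨⟨hs1, hsm⟩, hle⟩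
      exact ⟨hs1, (thresholdRow_le_thresholdRow_iff hg hsm).mp hle⟩
    · rintro ⟨hs1, hsf⟩
      have hsm := hsf.trans ((mem_labelings.mp hf).1 i)
      exact ⟨⟨hs1, hsm⟩, (thresholdRow_le_thresholdRow_iff hg hsm).mpr hsf⟩
  rw [rowRank, chainRank, nonzeroRows_thresholdMatrix hf hg, filter_image,
    card_image_of_injOn ((thresholdRow_injOn_Icc hg).mono (filter_subset _ _)), thresholdMatrix,
    hfilter, Nat.card_Icc, Nat.add_sub_cancel]

lemma colCount_thresholdMatrix (hf : f ∈ labelings n m) (hg : g ∈ labelings k m) (j : Fin k) :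
    colCount (thresholdMatrix m f g) j = g j := by
  have hgj := (mem_labelings.mp hg).1 j
  have hfilter : {s ∈ Icc 1 m | thresholdRow m g s j} = Icc (m + 1 - g j) m := by
    ext s
    simp only [mem_filter, mem_Icc, thresholdRow, decide_eq_true_eq]
    omega
  rw [colCount, nonzeroRows_thresholdMatrix hf hg, filter_image,
    card_image_of_injOn ((thresholdRow_injOn_Icc hg).mono (filter_subset _ _)), hfilter,
    Nat.card_Icc]
  omega

end NonzeroRows

namespace IsLonesum

variable {n k : ℕ} {M : Fin n → Fin k → Bool} (hM : IsLonesum M)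
include hM

lemma le_total (i i' : Fin n) : M i ≤ M i' ∨ M i' ≤ M i := by
  by_contra! h
  simp only [Pi.le_def, Bool.le_iff_imp, not_forall, Bool.not_eq_true] at h
  obtain ⟨⟨j, hij, hi'j⟩, ⟨j', hi'j', hij'⟩⟩ := h
  rcases lt_or_gt_of_ne (show i ≠ i' by rintro rfl; simp_all) with hi | hi <;>
    rcases lt_or_gt_of_ne (show j ≠ j' by rintro rfl; simp_all) with hj | hj
  · exact (hM i i' j j' hi hj).2 ⟨hij, hij', hi'j, hi'j'⟩
  · exact (hM i i' j' j hi hj).1 ⟨hij', hij, hi'j', hi'j⟩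
  · exact (hM i' i j j' hi hj).1 ⟨hi'j, hi'j', hij, hij'⟩
  · exact (hM i' i j' j hi hj).2 ⟨hi'j', hi'j, hij', hij⟩

lemma isChain_nonzeroRows : IsChain (· ≤ ·) (nonzeroRows M : Set (Fin k → Bool)) := by
  rintro r hr r' hr' -
  obtain ⟨-, i, rfl⟩ := mem_nonzeroRows.mp hr
  obtain ⟨-, i', rfl⟩ := mem_nonzeroRows.mp hr'
  exact hM.le_total i i'

lemma apply_eq_true_iff (i : Fin n) (j : Fin k) :
    M i j = true ↔ #(nonzeroRows M) < rowRank M i + colCount M j := by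
  -- the rows below `M i` and the rows through column `j` cover the chain, and meet iff `M i j`
  have hcard := card_union_add_card_inter {r ∈ nonzeroRows M | r ≤ M i} {r ∈ nonzeroRows M | r j}
  rw [← filter_or, ← filter_and] at hcard
  simp only [rowRank, chainRank, colCount]
  constructor
  · intro hij
    have hMi : M i ∈ nonzeroRows M :=
      mem_nonzeroRows.mpr ⟨fun h => by simp [h] at hij, i, rfl⟩
    have hunion : {r ∈ nonzeroRows M | r ≤ M i ∨ r j} = nonzeroRows M := by
      refine filter_true_of_mem fun r hr => ?_
      obtain ⟨-, i', rfl⟩ := mem_nonzeroRows.mp hr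
      exact (hM.le_total i' i).imp_right fun h => Bool.le_iff_imp.mp (h j) hij
    have hinter : 0 < #{r ∈ nonzeroRows M | r ≤ M i ∧ r j} :=
      card_pos.mpr ⟨M i, mem_filter.mpr ⟨hMi, le_rfl, hij⟩⟩
    rw [hunion] at hcard
    omega
  · intro h
    by_contra hij
    have hinter : {r ∈ nonzeroRows M | r ≤ M i ∧ r j} = ∅ :=
      filter_eq_empty_iff.mpr fun r _ ⟨hle, hrj⟩ => hij (Bool.le_iff_imp.mp (hle j) hrj)
    have := card_le_card (filter_subset (fun r => r ≤ M i ∨ r j) (nonzeroRows M))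
    rw [hinter, card_empty] at hcard
    omega

lemma eq_thresholdMatrix : M = thresholdMatrix #(nonzeroRows M) (rowRank M) (colCount M) := by
  funext i j
  rw [Bool.eq_iff_iff, hM.apply_eq_true_iff]
  simp [thresholdMatrix, thresholdRow]

lemma rowRank_mem_labelings : rowRank M ∈ labelings n #(nonzeroRows M) := by
  refine mem_labelings.mpr ⟨fun i => chainRank_le_card, fun t ht htm => ?_⟩
  have : t ∈ (nonzeroRows M).image (chainRank (nonzeroRows M)) := by
    rw [image_chainRank hM.isChain_nonzeroRows, mem_Icc]
    exact ⟨ht, htm⟩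
  obtain ⟨r, hr, rfl⟩ := mem_image.mp this
  obtain ⟨-, i, rfl⟩ := mem_nonzeroRows.mp hr
  exact ⟨i, rfl⟩

lemma chainRank_thresholdRow {s : ℕ} (hs : s ≤ #(nonzeroRows M)) :
    chainRank (nonzeroRows M) (thresholdRow #(nonzeroRows M) (colCount M) s) = s := by
  rcases Nat.eq_zero_or_pos s with rfl | hs0
  · rw [thresholdRow_zero (g := colCount M) fun _ => card_filter_le _ _]
    exact card_eq_zero.mpr (filter_eq_empty_iff.mpr fun r hr hle =>
      (mem_nonzeroRows.mp hr).1 (le_bot_iff.mp hle))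
  · obtain ⟨i, rfl⟩ := (mem_labelings.mp hM.rowRank_mem_labelings).2 s hs0 hs
    rw [show thresholdRow _ (colCount M) (rowRank M i) = M i from
      (congrFun hM.eq_thresholdMatrix i).symm]
    rfl

lemma colCount_mem_labelings : colCount M ∈ labelings k #(nonzeroRows M) :=
  mem_labelings_of_injOn_thresholdRow (fun _ => card_filter_le _ _)
    (Set.LeftInvOn.injOn fun _ hs => hM.chainRank_thresholdRow hs)

lemma card_nonzeroRows_le : #(nonzeroRows M) ≤ min n k :=
  le_min (le_of_mem_labelings hM.rowRank_mem_labelings)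
    (le_of_mem_labelings hM.colCount_mem_labelings)

end IsLonesum

theorem sum_pow_lonesumWeight_eq {R : Type*} [CommSemiring R] (q : R) (n k : ℕ) :
    ∑ M ∈ univ.filter (fun M : Fin n → Fin k → Bool => IsLonesum M), q ^ lonesumWeight M =
      ∑ m ∈ range (min n k + 1),
        (∑ f ∈ labelings n m, q ^ labelWeight f) * ∑ g ∈ labelings k m, q ^ labelWeight g := by
  simp_rw [sum_mul_sum, ← pow_add,
    ← sum_product' (f := fun f g => q ^ (labelWeight f + labelWeight g)), sum_sigma']
  refine sum_nbij' (fun M => ⟨#(nonzeroRows M), rowRank M, colCount M⟩)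
    (fun p => thresholdMatrix p.1 p.2.1 p.2.2) ?_ ?_ ?_ ?_ ?_
  · intro M hM
    have hM := (mem_filter.mp hM).2
    exact mem_sigma.mpr ⟨mem_range.mpr (Nat.lt_succ_of_le hM.card_nonzeroRows_le),
      mem_product.mpr ⟨hM.rowRank_mem_labelings, hM.colCount_mem_labelings⟩⟩
  · intro p _
    exact mem_filter.mpr ⟨mem_univ _, isLonesum_thresholdMatrix⟩
  · intro M hM
    exact (mem_filter.mp hM).2.eq_thresholdMatrix.symm
  · rintro ⟨m, f, g⟩ hp
    obtain ⟨-, hfg⟩ := mem_sigma.mp hp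
    obtain ⟨hf, hg⟩ := mem_product.mp hfg
    simp only [card_nonzeroRows_thresholdMatrix hf hg, Sigma.mk.injEq, heq_eq_eq, true_and,
      Prod.mk.injEq]
    exact ⟨funext (rowRank_thresholdMatrix hf hg), funext (colCount_thresholdMatrix hf hg)⟩
  · intro M hM
    have hM := (mem_filter.mp hM).2
    conv_lhs => rw [hM.eq_thresholdMatrix]
    exact congrArg (q ^ ·)
      (lonesumWeight_thresholdMatrix hM.rowRank_mem_labelings hM.colCount_mem_labelings)

namespace IsPartitionOf

variable {S : Finset ℕ} {π : Finset (Finset ℕ)} (hπ : IsPartitionOf S π)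
include hπ

lemma subset {B : Finset ℕ} (hB : B ∈ π) : B ⊆ S := fun x hx => (hπ.2.2 x).mpr ⟨B, hB, hx⟩

lemma exists_mem {x : ℕ} (hx : x ∈ S) : ∃ B ∈ π, x ∈ B := (hπ.2.2 x).mp hx

lemma eq_of_mem_of_mem {B B' : Finset ℕ} (hB : B ∈ π) (hB' : B' ∈ π) {x : ℕ} (hx : x ∈ B)
    (hx' : x ∈ B') : B = B' := by
  by_contra hne
  exact disjoint_left.mp (hπ.2.1 hB hB' hne) hx hx'

lemma filter_mem_eq_singleton {B : Finset ℕ} (hB : B ∈ π) {x : ℕ} (hx : x ∈ B) :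
    {C ∈ π | x ∈ C} = {B} := by
  ext C
  simp only [mem_filter, mem_singleton]
  exact ⟨fun h => hπ.eq_of_mem_of_mem h.1 hB h.2 hx, by rintro rfl; exact ⟨hB, hx⟩⟩

lemma card_filter_notMem_add_one {x : ℕ} (hx : x ∈ S) : #{B ∈ π | x ∉ B} + 1 = #π := by
  obtain ⟨B, hB, hxB⟩ := hπ.exists_mem hx
  rw [← card_singleton B, ← hπ.filter_mem_eq_singleton hB hxB, add_comm]
  exact card_filter_add_card_filter_not _

lemma mem_iff_of_mem {B : Finset ℕ} (hB : B ∈ π) {a : ℕ} (ha : a ∈ B) {x : ℕ} :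
    x ∈ B ↔ x ∈ S ∧ ∀ C ∈ π, a ∉ C → x ∉ C := by
  refine ⟨fun hx => ⟨hπ.subset hB hx, fun C hC haC hxC => haC ?_⟩, fun ⟨hxS, h⟩ => ?_⟩
  · rwa [hπ.eq_of_mem_of_mem hC hB hxC hx]
  · obtain ⟨C, hC, hxC⟩ := hπ.exists_mem hxS
    by_cases haC : a ∈ C
    · rwa [hπ.eq_of_mem_of_mem hB hC ha haC]
    · exact absurd hxC (h C hC haC)

lemma mem_of_filter_eq {π' : Finset (Finset ℕ)} (hπ' : IsPartitionOf S π') {a : ℕ} (ha : a ∈ S)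
    (h : {B ∈ π | a ∉ B} = {B ∈ π' | a ∉ B}) {B : Finset ℕ} (hB : B ∈ π) : B ∈ π' := by
  by_cases haB : a ∈ B
  · obtain ⟨B', hB', haB'⟩ := hπ'.exists_mem ha
    have hfilt (C : Finset ℕ) : C ∈ π ∧ a ∉ C ↔ C ∈ π' ∧ a ∉ C := by
      simpa only [mem_filter] using congrArg (C ∈ ·) h |>.to_iff
    convert hB' using 1
    ext x
    rw [hπ.mem_iff_of_mem hB haB, hπ'.mem_iff_of_mem hB' haB']
    simp only [and_congr_right_iff]
    exact fun _ => ⟨fun h' C hC haC => h' C ((hfilt C).mpr ⟨hC, haC⟩).1 haC,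
      fun h' C hC haC => h' C ((hfilt C).mp ⟨hC, haC⟩).1 haC⟩
  · exact (mem_filter.mp (h ▸ mem_filter.mpr ⟨hB, haB⟩ : B ∈ {B ∈ π' | a ∉ B})).1

lemma eq_of_filter_eq {π' : Finset (Finset ℕ)} (hπ' : IsPartitionOf S π') {a : ℕ} (ha : a ∈ S)
    (h : {B ∈ π | a ∉ B} = {B ∈ π' | a ∉ B}) : π = π' :=
  Subset.antisymm (fun _ => hπ.mem_of_filter_eq hπ' ha h)
    (fun _ => hπ'.mem_of_filter_eq hπ ha h.symm)

lemma ciglerWeight_eq {B : Finset ℕ} (hB : B ∈ π) (h0 : 0 ∈ B) :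
    ciglerWeight π = ∑ i ∈ B, i := by
  rw [ciglerWeight, hπ.filter_mem_eq_singleton hB h0, sum_singleton]

end IsPartitionOf

section Fibers

variable {β : Type*} [DecidableEq β] (F : ℕ → β) {S : Finset ℕ} {T : Finset β}

lemma isPartitionOf_image_fiber (h : S.image F = T) :
    IsPartitionOf S (T.image fun t => {x ∈ S | F x = t}) := by
  refine ⟨fun B hB => ?_, fun B hB B' hB' hne => ?_, fun x => ⟨fun hx => ?_, fun ⟨B, hB, hx⟩ => ?_⟩⟩
  · obtain ⟨t, ht, rfl⟩ := mem_image.mp hB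
    obtain ⟨x, hx, rfl⟩ := mem_image.mp (h ▸ ht)
    exact ⟨x, mem_filter.mpr ⟨hx, rfl⟩⟩
  · obtain ⟨t, -, rfl⟩ := mem_image.mp hB
    obtain ⟨t', -, rfl⟩ := mem_image.mp hB'
    exact disjoint_filter.mpr fun x _ hx hx' => hne (by rw [← hx, hx'])
  · exact ⟨_, mem_image_of_mem _ (h ▸ mem_image_of_mem F hx), mem_filter.mpr ⟨hx, rfl⟩⟩
  · obtain ⟨t, -, rfl⟩ := mem_image.mp hB
    exact (mem_filter.mp hx).1

lemma injOn_fiber (h : S.image F = T) : Set.InjOn (fun t => {x ∈ S | F x = t}) T := by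
  intro t ht t' _ heq
  obtain ⟨x, hx, rfl⟩ := mem_image.mp (h ▸ ht : t ∈ S.image F)
  have hx' : x ∈ {x ∈ S | F x = t'} := by
    simp only at heq
    exact heq ▸ mem_filter.mpr ⟨hx, rfl⟩
  exact (mem_filter.mp hx').2

end Fibers

def setPartitions (N k : ℕ) : Finset (Finset (Finset ℕ)) :=
  {π ∈ (range N).powerset.powerset | IsPartitionOf (range N) π ∧ #π = k}

lemma mem_setPartitions {N k : ℕ} {π : Finset (Finset ℕ)} :
    π ∈ setPartitions N k ↔ IsPartitionOf (range N) π ∧ #π = k := by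
  refine mem_filter.trans (and_iff_right_of_imp fun h => mem_powerset.mpr fun B hB => ?_)
  exact mem_powerset.mpr (h.1.subset hB)

lemma ciglerStirling_eq_sum (N k : ℕ) :
    ciglerStirling N k = ∑ π ∈ setPartitions N k, X ^ ciglerWeight π := by
  have hset : {π | IsPartitionOf (range N) π ∧ #π = k} = (setPartitions N k : Set _) := by
    ext π
    exact mem_setPartitions.symm
  rw [ciglerStirling, hset, finsum_mem_coe_finset]

section LabelPartition

variable {n m : ℕ} {f : Fin n → ℕ}

def shiftLabel (f : Fin n → ℕ) : ℕ → ℕ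
  | 0 => 0
  | x + 1 => if h : x < n then f ⟨x, h⟩ else 0

def labelBlock (f : Fin n → ℕ) (t : ℕ) : Finset ℕ := {x ∈ range (n + 1) | shiftLabel f x = t}

def labelPartition (m : ℕ) (f : Fin n → ℕ) : Finset (Finset ℕ) :=
  (range (m + 1)).image (labelBlock f)

lemma shiftLabel_succ (i : Fin n) : shiftLabel f (i + 1) = f i := by
  simp [shiftLabel]

lemma succ_mem_labelBlock {i : Fin n} {t : ℕ} :
    (i : ℕ) + 1 ∈ labelBlock f t ↔ f i = t := by
  simp [labelBlock, shiftLabel_succ]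

lemma zero_mem_labelBlock {t : ℕ} : 0 ∈ labelBlock f t ↔ t = 0 := by
  simp [labelBlock, shiftLabel, eq_comm]

lemma mem_labelBlock_succ {t x : ℕ} :
    x ∈ labelBlock f (t + 1) ↔ ∃ i : Fin n, f i = t + 1 ∧ (i : ℕ) + 1 = x := by
  rcases x with _ | x
  · simp [zero_mem_labelBlock]
  · simp only [labelBlock, mem_filter, mem_range]
    constructor
    · rintro ⟨hx, hfx⟩
      exact ⟨⟨x, by omega⟩, (shiftLabel_succ _).symm.trans hfx, rfl⟩
    · rintro ⟨i, hi, hix⟩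
      obtain rfl : (i : ℕ) = x := by omega
      exact ⟨by omega, (shiftLabel_succ i).trans hi⟩

lemma image_shiftLabel (hf : f ∈ labelings n m) :
    (range (n + 1)).image (shiftLabel f) = range (m + 1) := by
  obtain ⟨hf1, hf2⟩ := mem_labelings.mp hf
  ext t
  simp only [mem_image, mem_range]
  constructor
  · rintro ⟨_ | x, hx, rfl⟩
    · simp [shiftLabel]
    · have hx' : shiftLabel f (x + 1) = f ⟨x, by omega⟩ := shiftLabel_succ (⟨x, by omega⟩ : Fin n)
      have := hf1 ⟨x, by omega⟩
      omega
  · intro ht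
    rcases Nat.eq_zero_or_pos t with rfl | ht0
    · exact ⟨0, by omega, rfl⟩
    · obtain ⟨i, rfl⟩ := hf2 t ht0 (by omega)
      exact ⟨i + 1, by omega, shiftLabel_succ i⟩

lemma labelPartition_mem_setPartitions (hf : f ∈ labelings n m) :
    labelPartition m f ∈ setPartitions (n + 1) (m + 1) := by
  rw [mem_setPartitions, labelPartition]
  refine ⟨isPartitionOf_image_fiber _ (image_shiftLabel hf), ?_⟩
  have hinj : Set.InjOn (labelBlock f) (range (m + 1)) := injOn_fiber _ (image_shiftLabel hf)
  rw [card_image_of_injOn hinj, card_range]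

lemma ciglerWeight_labelPartition (hf : f ∈ labelings n m) :
    ciglerWeight (labelPartition m f) = labelWeight f := by
  have hπ := (mem_setPartitions.mp (labelPartition_mem_setPartitions hf)).1
  rw [hπ.ciglerWeight_eq (mem_image_of_mem _ (mem_range.mpr m.succ_pos))
      (zero_mem_labelBlock.mpr rfl), labelBlock, sum_filter, sum_range_succ',
    ← Fin.sum_univ_eq_sum_range (fun x => if shiftLabel f (x + 1) = 0 then x + 1 else 0)]
  simp [labelWeight, shiftLabel]

lemma filter_labelPartition :
    {B ∈ labelPartition m f | 0 ∉ B} = univ.image fun t : Fin m => labelBlock f (t + 1) := by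
  ext B
  simp only [labelPartition, mem_filter, mem_image, mem_range, mem_univ, true_and]
  constructor
  · rintro ⟨⟨_ | t, ht, rfl⟩, h0⟩
    · exact absurd (zero_mem_labelBlock.mpr rfl) h0
    · exact ⟨⟨t, by omega⟩, rfl⟩
  · rintro ⟨t, rfl⟩
    exact ⟨⟨t + 1, by omega, rfl⟩, by simp [zero_mem_labelBlock]⟩

lemma labelBlock_succ_injective (hf : f ∈ labelings n m) :
    Function.Injective fun t : Fin m => labelBlock f (t + 1) := fun t t' h =>
  Fin.ext (Nat.succ_injective (injOn_fiber _ (image_shiftLabel hf)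
    (by simp) (by simp) h))

end LabelPartition

section LabelOfBlocks

open Function

variable {n m : ℕ}

def labelOfBlocks (b : Fin m → Finset ℕ) (i : Fin n) : ℕ :=
  if h : ∃ t, (i : ℕ) + 1 ∈ b t then h.choose + 1 else 0

lemma labelOfBlocks_eq_succ_iff {b : Fin m → Finset ℕ} (hb : Pairwise (Disjoint on b)) {i : Fin n}
    {t : Fin m} : labelOfBlocks b i = t + 1 ↔ (i : ℕ) + 1 ∈ b t := by
  unfold labelOfBlocks
  split_ifs with h
  · rw [Nat.add_right_cancel_iff, Fin.val_inj]
    refine ⟨fun e => e ▸ h.choose_spec, fun ht => ?_⟩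
    by_contra hne
    exact disjoint_left.mp (hb hne) h.choose_spec ht
  · exact ⟨False.elim, fun ht => absurd ⟨t, ht⟩ h⟩

lemma labelOfBlocks_eq_zero_iff {b : Fin m → Finset ℕ} {i : Fin n} :
    labelOfBlocks b i = 0 ↔ ∀ t, (i : ℕ) + 1 ∉ b t := by
  unfold labelOfBlocks
  split_ifs with h <;> simp_all

lemma labelOfBlocks_labelBlock {f : Fin n → ℕ} (hf : f ∈ labelings n m) :
    labelOfBlocks (fun t : Fin m => labelBlock f (t + 1)) = f := by
  have hb : Pairwise (Disjoint on fun t : Fin m => labelBlock f (t + 1)) := fun t t' hne =>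
    disjoint_filter.mpr fun _ _ h h' => hne (Fin.ext (by omega))
  funext i
  rcases Nat.eq_zero_or_pos (f i) with h | h
  · rw [h, labelOfBlocks_eq_zero_iff]
    intro t ht
    rw [succ_mem_labelBlock] at ht
    omega
  · obtain ⟨t, ht⟩ : ∃ t : Fin m, f i = t + 1 :=
      ⟨⟨f i - 1, by have := (mem_labelings.mp hf).1 i; omega⟩, by simp; omega⟩
    rw [ht, labelOfBlocks_eq_succ_iff hb]
    exact succ_mem_labelBlock.mpr ht

variable {π : Finset (Finset ℕ)} (hπ : IsPartitionOf (range (n + 1)) π)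
  (e : Fin m ≃ {B // B ∈ {B ∈ π | 0 ∉ B}})
include hπ

lemma labelBlock_labelOfBlocks (t : Fin m) :
    labelBlock (labelOfBlocks (n := n) fun t => (e t : Finset ℕ)) (t + 1) = e t := by
  have hb : Pairwise (Disjoint on fun t => (e t : Finset ℕ)) := fun t t' hne =>
    hπ.2.1 (mem_filter.mp (e t).2).1 (mem_filter.mp (e t').2).1
      fun h => hne (e.injective (Subtype.ext h))
  ext x
  rw [mem_labelBlock_succ]
  constructor
  · rintro ⟨i, hi, rfl⟩
    exact (labelOfBlocks_eq_succ_iff hb).mp hi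
  · intro hx
    have hxn := mem_range.mp (hπ.subset (mem_filter.mp (e t).2).1 hx)
    obtain ⟨y, rfl⟩ :=
      Nat.exists_eq_succ_of_ne_zero (ne_of_mem_of_not_mem hx (mem_filter.mp (e t).2).2)
    exact ⟨⟨y, by omega⟩, (labelOfBlocks_eq_succ_iff hb).mpr hx, rfl⟩

lemma labelOfBlocks_mem_labelings :
    labelOfBlocks (fun t => (e t : Finset ℕ)) ∈ labelings n m := by
  refine mem_labelings.mpr ⟨fun i => ?_, fun t ht htm => ?_⟩
  · unfold labelOfBlocks
    split_ifs with h
    · exact h.choose.isLt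
    · exact Nat.zero_le m
  · let s : Fin m := ⟨t - 1, by omega⟩
    obtain ⟨x, hx⟩ := hπ.1 _ (mem_filter.mp (e s).2).1
    rw [← labelBlock_labelOfBlocks hπ e s, mem_labelBlock_succ] at hx
    obtain ⟨i, hi, -⟩ := hx
    exact ⟨i, by simp only [hi, s]; omega⟩

lemma labelPartition_labelOfBlocks :
    labelPartition m (labelOfBlocks (n := n) fun t => (e t : Finset ℕ)) = π := by
  have hπ' := (mem_setPartitions.mp
    (labelPartition_mem_setPartitions (labelOfBlocks_mem_labelings hπ e))).1
  refine hπ'.eq_of_filter_eq hπ (a := 0) (by simp) ?_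
  rw [filter_labelPartition]
  ext B
  simp only [labelBlock_labelOfBlocks hπ e, mem_image, mem_univ, true_and]
  exact ⟨by rintro ⟨t, rfl⟩; exact (e t).2, fun hB => ⟨e.symm ⟨B, hB⟩, by simp⟩⟩

end LabelOfBlocks

section Counting

variable {n m : ℕ}

lemma exists_equiv_labelBlock {f : Fin n → ℕ} (hf : f ∈ labelings n m) :
    ∃ e : Fin m ≃ {B // B ∈ {B ∈ labelPartition m f | 0 ∉ B}},
      ∀ t, (e t : Finset ℕ) = labelBlock f (t + 1) := by
  have hmem (t : Fin m) : labelBlock f (t + 1) ∈ {B ∈ labelPartition m f | 0 ∉ B} := by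
    rw [filter_labelPartition]
    exact mem_image_of_mem _ (mem_univ t)
  refine ⟨Equiv.ofBijective (fun t => ⟨_, hmem t⟩) ⟨fun t t' h => ?_, fun ⟨B, hB⟩ => ?_⟩,
    fun _ => rfl⟩
  · exact labelBlock_succ_injective hf (congrArg Subtype.val h)
  · rw [filter_labelPartition] at hB
    obtain ⟨t, -, rfl⟩ := mem_image.mp hB
    exact ⟨t, rfl⟩

lemma card_labelPartition_fiber {π : Finset (Finset ℕ)} (hπ : π ∈ setPartitions (n + 1) (m + 1)) :
    #{f ∈ labelings n m | labelPartition m f = π} = m.factorial := by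
  obtain ⟨hπ, hcard⟩ := mem_setPartitions.mp hπ
  have hP : #{B ∈ π | 0 ∉ B} = m := by
    have := hπ.card_filter_notMem_add_one (x := 0) (by simp)
    omega
  have hequiv := Fintype.card_equiv (equivFinOfCardEq hP).symm
  rw [Fintype.card_fin] at hequiv
  rw [← hequiv, ← card_univ]
  symm
  refine card_nbij (fun e => labelOfBlocks fun t => (e t : Finset ℕ)) (fun e _ => ?_)
    (fun e _ e' _ h => ?_) (fun f hf => ?_)
  · exact mem_filter.mpr ⟨labelOfBlocks_mem_labelings hπ e, labelPartition_labelOfBlocks hπ e⟩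
  · refine Equiv.ext fun t => Subtype.ext ?_
    rw [← labelBlock_labelOfBlocks hπ e, ← labelBlock_labelOfBlocks hπ e']
    exact congrArg (labelBlock · _) h
  · obtain ⟨hfL, rfl⟩ := mem_filter.mp hf
    obtain ⟨e, he⟩ := exists_equiv_labelBlock hfL
    refine ⟨e, mem_coe.mpr (mem_univ e), ?_⟩
    simp only [he]
    exact labelOfBlocks_labelBlock hfL

theorem sum_pow_labelWeight_eq {R : Type*} [CommSemiring R] (q : R) (n m : ℕ) :
    ∑ f ∈ labelings n m, q ^ labelWeight f =
      (m.factorial : R) * ∑ π ∈ setPartitions (n + 1) (m + 1), q ^ ciglerWeight π := by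
  rw [← sum_fiberwise_of_maps_to fun _ => labelPartition_mem_setPartitions, mul_sum]
  refine sum_congr rfl fun π hπ => ?_
  calc ∑ f ∈ labelings n m with labelPartition m f = π, q ^ labelWeight f
      = ∑ f ∈ labelings n m with labelPartition m f = π, q ^ ciglerWeight π := by
        refine sum_congr rfl fun f hf => ?_
        obtain ⟨hfL, rfl⟩ := mem_filter.mp hf
        rw [ciglerWeight_labelPartition hfL]
    _ = (m.factorial : R) * q ^ ciglerWeight π := by
        rw [sum_const, card_labelPartition_fiber hπ, nsmul_eq_mul]

end Counting

end

theorem lonesum_weight_sum_eq (n k : ℕ) :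
    (∑ M ∈ Finset.univ.filter (fun M : Fin n → Fin k → Bool => IsLonesum M),
        (Polynomial.X : Polynomial ℚ) ^ lonesumWeight M)
      = ∑ m ∈ Finset.range (min n k + 1),
          (m.factorial : Polynomial ℚ) * ciglerStirling (n + 1) (m + 1) *
            (m.factorial : Polynomial ℚ) * ciglerStirling (k + 1) (m + 1) := by
  rw [sum_pow_lonesumWeight_eq]
  refine sum_congr rfl fun m _ => ?_
  rw [sum_pow_labelWeight_eq, sum_pow_labelWeight_eq, ciglerStirling_eq_sum, ciglerStirling_eq_sum]
  ring
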